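/- arXiv:2003.10800 — 4 statements merged into one kernel-verified Lean document; each statement's English description precedes it below -/
import Mathlib

section
/- Let 𝒰 be a nilpotent associative algebra over a finite field F of odd characteristic, equipped with an F-linear involutive anti-automorphism x ↦ x†. Let U† = {u ∈ 1 + 𝒰 : u† = u⁻¹} and 𝔲 = {x ∈ 𝒰 : x† = -x}. Then the Cayley map f(1+x) = 2x(x+2)⁻¹ maps U† bijectively onto 𝔲. -/
section Helpers

variable {A : Type*} [Ring A]

lemma aux_inv_rev {u v : A} (hu : IsUnit u) (hv : IsUnit v) :
    Ring.inverse (u * v) = Ring.inverse v * Ring.inverse u := by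
  obtain ⟨U, rfl⟩ := hu
  obtain ⟨V, rfl⟩ := hv
  rw [← Units.val_mul, Ring.inverse_unit, Ring.inverse_unit, Ring.inverse_unit,
    mul_inv_rev, Units.val_mul]

lemma aux_comm_inv {p u : A} (h : Commute p u) (hu : IsUnit u) :
    Commute p (Ring.inverse u) := by
  obtain ⟨U, rfl⟩ := hu
  rw [Ring.inverse_unit]
  exact h.units_inv_right

lemma aux_inv_inv {u : A} (hu : IsUnit u) : Ring.inverse (Ring.inverse u) = u := by
  obtain ⟨U, rfl⟩ := hu
  rw [Ring.inverse_unit, Ring.inverse_unit (U⁻¹), inv_inv]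

lemma aux_inv_eq {u v : A} (h1 : u * v = 1) (h2 : v * u = 1) : Ring.inverse u = v := by
  have : Ring.inverse ((⟨u, v, h1, h2⟩ : Aˣ) : A) = v := Ring.inverse_unit _
  exact this

end Helpers

/-- Let `S` be a nilpotent associative algebra over a finite field of odd
characteristic, equipped with a linear involutive anti-automorphism `dag` (extended to
the unitalization with `dag 1 = 1`). Then the Cayley map `1 + x ↦ 2x(x+2)⁻¹` maps
`U† = {u ∈ 1 + S : u† = u⁻¹}` bijectively onto `𝔲 = {x ∈ S : x† = -x}`. -/
theorem stmt6 {F A : Type*} [Field F] [Fintype F] (hF : ringChar F ≠ 2)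
    [Ring A] [Algebra F A]
    (S : Submodule F A) (hmulS : ∀ x ∈ S, ∀ y ∈ S, x * y ∈ S)
    (k : ℕ) (hnil : S ^ k = ⊥)
    (dag : A →ₗ[F] A)
    (hanti : ∀ x y : A, dag (x * y) = dag y * dag x)
    (hinvol : ∀ x : A, dag (dag x) = x)
    (hone : dag 1 = 1)
    (hSdag : ∀ x ∈ S, dag x ∈ S) :
    Set.BijOn (fun a : A => 2 * (a - 1) * Ring.inverse (a - 1 + 2))
      {a : A | (∃ x ∈ S, a = 1 + x) ∧ dag a * a = 1 ∧ a * dag a = 1}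
      {x : A | x ∈ S ∧ dag x = -x} := by
  classical
  have h2F : (2 : F) ≠ 0 := Ring.two_ne_zero hF
  -- nilpotency of elements of S
  have hnilx : ∀ x ∈ S, IsNilpotent x := by
    intro x hx
    rcases Nat.eq_zero_or_pos k with hk | hk
    · subst hk
      have h1 : (1 : A) ∈ (S ^ 0 : Submodule F A) := by
        rw [pow_zero]; exact Submodule.one_le.mp le_rfl
      rw [hnil] at h1
      have h10 : (1 : A) = 0 := Submodule.mem_bot F |>.mp h1
      exact ⟨1, by rw [pow_one, ← mul_one x, h10, mul_zero]⟩
    · refine ⟨k, ?_⟩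
      have := Submodule.pow_mem_pow S hx k
      rw [hnil] at this
      exact Submodule.mem_bot F |>.mp this
  -- powers stay in S
  have hpowS : ∀ t ∈ S, ∀ m : ℕ, t ^ (m + 1) ∈ S := by
    intro t ht m
    induction m with
    | zero => simpa using ht
    | succ n ih => rw [pow_succ]; exact hmulS _ ih _ ht
  -- geometric series inverse for 1 + s
  have hinv1 : ∀ s ∈ S, ∃ y ∈ S, (1 + s) * (1 + y) = 1 ∧ (1 + y) * (1 + s) = 1 := by
    intro s hs
    obtain ⟨n, hn⟩ := hnilx s hs
    refine ⟨∑ i ∈ Finset.range n, (-s) ^ (i + 1), ?_, ?_, ?_⟩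
    · exact Submodule.sum_mem _ fun i _ => hpowS (-s) (neg_mem hs) i
    · have hsum : (1 : A) + ∑ i ∈ Finset.range n, (-s) ^ (i + 1)
          = ∑ i ∈ Finset.range (n + 1), (-s) ^ i := by
        rw [Finset.sum_range_succ' (fun i => (-s) ^ i) n]
        simp [add_comm]
      have h1 : ((-s : A) - 1) * ∑ i ∈ Finset.range (n + 1), (-s) ^ i = (-s) ^ (n + 1) - 1 :=
        mul_geom_sum (-s) (n + 1)
      have hz : (-s : A) ^ (n + 1) = 0 := by
        have hs1 : s ^ (n + 1) = 0 := by rw [pow_succ, hn, zero_mul]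
        rw [neg_pow, hs1, mul_zero]
      rw [hsum]
      have : (1 + s : A) = -((-s) - 1) := by noncomm_ring
      rw [this, neg_mul, h1, hz]; noncomm_ring
    · have hsum : (1 : A) + ∑ i ∈ Finset.range n, (-s) ^ (i + 1)
          = ∑ i ∈ Finset.range (n + 1), (-s) ^ i := by
        rw [Finset.sum_range_succ' (fun i => (-s) ^ i) n]
        simp [add_comm]
      have h1 : (∑ i ∈ Finset.range (n + 1), (-s) ^ i) * ((-s : A) - 1) = (-s) ^ (n + 1) - 1 :=
        geom_sum_mul (-s) (n + 1)
      have hz : (-s : A) ^ (n + 1) = 0 := by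
        have hs1 : s ^ (n + 1) = 0 := by rw [pow_succ, hn, zero_mul]
        rw [neg_pow, hs1, mul_zero]
      rw [hsum]
      have : (1 + s : A) = -((-s) - 1) := by noncomm_ring
      rw [this, mul_neg, h1, hz]; noncomm_ring
  -- units of the form (algebraMap c + s) with explicit inverse shape
  have hkey : ∀ (c : F), c ≠ 0 → ∀ s ∈ S, IsUnit (algebraMap F A c + s) ∧
      ∃ y ∈ S, Ring.inverse (algebraMap F A c + s) = c⁻¹ • ((1 : A) + y) := by
    intro c hc s hs
    have hzS : c⁻¹ • s ∈ S := Submodule.smul_mem _ _ hs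
    obtain ⟨y, hyS, hy1, hy2⟩ := hinv1 _ hzS
    have hform : algebraMap F A c + s = c • ((1 : A) + c⁻¹ • s) := by
      rw [smul_add, smul_smul, mul_inv_cancel₀ hc, one_smul, Algebra.algebraMap_eq_smul_one]
    have e1 : (algebraMap F A c + s) * (c⁻¹ • ((1 : A) + y)) = 1 := by
      rw [hform, smul_mul_smul_comm, mul_inv_cancel₀ hc, hy1, one_smul]
    have e2 : (c⁻¹ • ((1 : A) + y)) * (algebraMap F A c + s) = 1 := by
      rw [hform, smul_mul_smul_comm, inv_mul_cancel₀ hc, hy2, one_smul]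
    exact ⟨⟨⟨_, _, e1, e2⟩, rfl⟩, y, hyS, aux_inv_eq e1 e2⟩
  have h2A : (2 : A) = algebraMap F A 2 := (map_ofNat (algebraMap F A) 2).symm
  -- membership: t * inverse (algebraMap c + s) ∈ S
  have hmem : ∀ (c : F), c ≠ 0 → ∀ s ∈ S, ∀ t ∈ S,
      t * Ring.inverse (algebraMap F A c + s) ∈ S := by
    intro c hc s hs t ht
    obtain ⟨-, y, hyS, hy⟩ := hkey c hc s hs
    rw [hy, mul_smul_comm, mul_add, mul_one]
    exact Submodule.smul_mem _ _ (add_mem ht (hmulS _ ht _ hyS))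
  -- dag of inverse
  have hdaginv : ∀ u : A, IsUnit u → dag (Ring.inverse u) = Ring.inverse (dag u) := by
    intro u hu
    obtain ⟨U, rfl⟩ := hu
    have e1 : dag (U : A) * dag ((U⁻¹ : Aˣ) : A) = 1 := by
      rw [← hanti, Units.inv_mul, hone]
    have e2 : dag ((U⁻¹ : Aˣ) : A) * dag (U : A) = 1 := by
      rw [← hanti, Units.mul_inv, hone]
    rw [Ring.inverse_unit, aux_inv_eq e1 e2]
  -- dag of 2 * t
  have hdag2 : ∀ t : A, dag (2 * t) = 2 * dag t := by
    intro t
    rw [two_mul, map_add, two_mul]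
  have hdag2' : dag (2 : A) = 2 := by
    have := hdag2 1
    rwa [mul_one, hone, mul_one] at this
  -- x + 2 unit for x ∈ S
  have hu2 : ∀ x ∈ S, IsUnit (x + 2) := by
    intro x hx
    have := (hkey 2 h2F x hx).1
    rwa [← h2A, add_comm] at this
  have h2unit : IsUnit (2 : A) := by
    have := (hkey 2 h2F 0 (zero_mem S)).1
    rwa [← h2A, add_zero] at this
  -- the image is in S
  have hfmem : ∀ x ∈ S, 2 * x * Ring.inverse (x + 2) ∈ S := by
    intro x hx
    have h2x : (2 : A) * x ∈ S := by
      rw [two_mul]; exact add_mem hx hx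
    have := hmem 2 h2F x hx _ h2x
    rwa [← h2A, add_comm] at this
  -- commuting helpers
  have hcomm2 : ∀ x : A, IsUnit (x + 2) → Commute (2 * x) (Ring.inverse (x + 2)) := by
    intro x hx
    refine aux_comm_inv ?_ hx
    show (2 * x) * (x + 2) = (x + 2) * (2 * x)
    noncomm_ring
  constructor
  · -- MapsTo
    intro a ha
    obtain ⟨⟨x, hxS, rfl⟩, hd1, hd2⟩ := ha
    have hx1 : (1 : A) + x - 1 = x := by noncomm_ring
    simp only [Set.mem_setOf_eq, hx1]
    set b := dag (1 + x) with hb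
    have hdagx : dag x = b - 1 := by
      have : dag ((1 + x) - 1) = b - dag 1 := by rw [map_sub]
      simpa [hone] using this
    have hux2 : IsUnit (x + 2) := hu2 x hxS
    constructor
    · exact hfmem x hxS
    · -- dag (2*x*inv(x+2)) = -(2*x*inv(x+2))
      have step1 : dag (2 * x * Ring.inverse (x + 2))
          = Ring.inverse (b + 1) * (2 * (b - 1)) := by
        have hb12 : b - 1 + 2 = b + 1 := by
          have h12 : (-1 : A) + 2 = 1 := by norm_num
          rw [sub_eq_add_neg, add_assoc, h12]
        rw [hanti, hdaginv _ hux2, map_add, hdagx, hdag2', hdag2, hdagx, hb12]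
      have hbunit : IsUnit b := ⟨⟨b, 1 + x, hd1, hd2⟩, rfl⟩
      have hinvb : Ring.inverse b = 1 + x := aux_inv_eq hd1 hd2
      have hb1 : b + 1 = b * (x + 2) := by
        have : b * (x + 2) = b * (1 + x) + b := by noncomm_ring
        rw [this, hd1, add_comm]
      have step2 : Ring.inverse (b + 1) = Ring.inverse (x + 2) * (1 + x) := by
        rw [hb1, aux_inv_rev hbunit hux2, hinvb]
      have step3 : (1 + x) * (2 * (b - 1)) = -(2 * x) := by
        have e : (1 + x) * (2 * (b - 1)) = 2 * ((1 + x) * b) - 2 * (1 + x) := by noncomm_ring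
        rw [e, hd2]; noncomm_ring
      rw [step1, step2, mul_assoc, step3, (hcomm2 x hux2).eq, mul_neg]
  constructor
  · -- InjOn
    have hrec : ∀ x ∈ S, x = Ring.inverse (2 - 2 * x * Ring.inverse (x + 2))
        * (2 * (2 * x * Ring.inverse (x + 2))) := by
      intro x hx
      set y := 2 * x * Ring.inverse (x + 2) with hy
      have hux2 : IsUnit (x + 2) := hu2 x hx
      have h0 : y * (x + 2) = 2 * x := by
        rw [hy, mul_assoc, Ring.inverse_mul_cancel _ hux2, mul_one]
      have h1 : (2 - y) * x = 2 * y := by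
        have e : (2 - y) * x = 2 * x - (y * (x + 2)) + 2 * y := by noncomm_ring
        rw [e, h0]; noncomm_ring
      have hyS : y ∈ S := hfmem x hx
      have hu2y : IsUnit (2 - y) := by
        have := (hkey 2 h2F (-y) (neg_mem hyS)).1
        rwa [← h2A, ← sub_eq_add_neg] at this
      calc x = Ring.inverse (2 - y) * ((2 - y) * x) :=
              (Ring.inverse_mul_cancel_left _ _ hu2y).symm
        _ = Ring.inverse (2 - y) * (2 * y) := by rw [h1]
    intro a1 ha1 a2 ha2 hfeq
    obtain ⟨⟨x1, hx1S, rfl⟩, -, -⟩ := ha1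
    obtain ⟨⟨x2, hx2S, rfl⟩, -, -⟩ := ha2
    have e1 : (1 : A) + x1 - 1 = x1 := by noncomm_ring
    have e2 : (1 : A) + x2 - 1 = x2 := by noncomm_ring
    simp only [e1, e2] at hfeq
    have hx12 : x1 = x2 := by
      rw [hrec x1 hx1S, hfeq, ← hrec x2 hx2S]
    rw [hx12]
  · -- SurjOn
    intro y hy
    obtain ⟨hyS, hydag⟩ := hy
    have hu2my : IsUnit ((2 : A) - y) := by
      have := (hkey 2 h2F (-y) (neg_mem hyS)).1
      rwa [← h2A, ← sub_eq_add_neg] at this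
    have hu2py : IsUnit ((2 : A) + y) := by
      have := (hkey 2 h2F y hyS).1
      rwa [← h2A] at this
    set w := Ring.inverse ((2 : A) - y) with hw
    set x := 2 * y * w with hxdef
    have hxS : x ∈ S := by
      have h2y : (2 : A) * y ∈ S := by rw [two_mul]; exact add_mem hyS hyS
      have := hmem 2 h2F (-y) (neg_mem hyS) _ h2y
      rwa [← h2A, ← sub_eq_add_neg] at this
    set a := (1 : A) + x with hadef
    have hwmul : w * ((2 : A) - y) = 1 := Ring.inverse_mul_cancel _ hu2my
    have hmulw : ((2 : A) - y) * w = 1 := Ring.mul_inverse_cancel _ hu2my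
    -- a = (2+y) * w
    have ha_eq : a = ((2 : A) + y) * w := by
      have h1 : a * ((2 : A) - y) = 2 + y := by
        rw [hadef, hxdef, add_mul, one_mul, mul_assoc, hwmul, mul_one]; noncomm_ring
      calc a = a * (((2 : A) - y) * w) := by rw [hmulw, mul_one]
        _ = (a * ((2 : A) - y)) * w := by rw [mul_assoc]
        _ = ((2 : A) + y) * w := by rw [h1]
    -- dag a = inverse (2+y) * (2-y)
    have hdagx : dag x = -(Ring.inverse ((2 : A) + y) * (2 * y)) := by
      rw [hxdef, hanti, hw, hdaginv _ hu2my, map_sub, hdag2', hydag, hdag2, hydag, sub_neg_eq_add]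
      simp only [mul_neg]
    have hda_eq : dag a = Ring.inverse ((2 : A) + y) * ((2 : A) - y) := by
      have h1 : ((2 : A) + y) * dag a = 2 - y := by
        rw [hadef, map_add, hone, hdagx, mul_add,
          mul_neg, ← mul_assoc, Ring.mul_inverse_cancel _ hu2py, one_mul]
        noncomm_ring
      calc dag a = (Ring.inverse ((2 : A) + y) * ((2 : A) + y)) * dag a := by
              rw [Ring.inverse_mul_cancel _ hu2py, one_mul]
        _ = Ring.inverse ((2 : A) + y) * (((2 : A) + y) * dag a) := by rw [mul_assoc]
        _ = _ := by rw [h1]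
    have hcpm : ((2 : A) - y) * ((2 : A) + y) = ((2 : A) + y) * ((2 : A) - y) := by
      noncomm_ring
    refine ⟨a, ⟨⟨x, hxS, hadef⟩, ?_, ?_⟩, ?_⟩
    · -- dag a * a = 1
      show dag a * a = 1
      rw [hda_eq, ha_eq, mul_assoc, ← mul_assoc ((2:A) - y), hcpm,
        mul_assoc, hmulw, mul_one, Ring.inverse_mul_cancel _ hu2py]
    · -- a * dag a = 1
      show a * dag a = 1
      have hwinv : w * Ring.inverse ((2 : A) + y) = Ring.inverse ((2 : A) + y) * w := by
        rw [hw, ← aux_inv_rev hu2py hu2my, ← aux_inv_rev hu2my hu2py, hcpm]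
      rw [hda_eq, ha_eq, mul_assoc, ← mul_assoc w, hwinv, mul_assoc,
        hwmul, mul_one, Ring.mul_inverse_cancel _ hu2py]
    · -- f a = y
      show 2 * (a - 1) * Ring.inverse (a - 1 + 2) = y
      have e1 : a - 1 = x := by rw [hadef]; noncomm_ring
      rw [e1]
      have e4 : (2 : A) * 2 = 4 := by rw [two_mul, two_add_two_eq_four]
      have h4 : IsUnit ((4 : A)) := by
        rw [← e4]; exact h2unit.mul h2unit
      have hx2 : x + 2 = 4 * w := by
        have h1 : (x + 2) * ((2 : A) - y) = 4 := by
          rw [hxdef, add_mul, mul_assoc, hwmul, mul_one, mul_sub, e4]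
          abel
        calc x + 2 = (x + 2) * (((2 : A) - y) * w) := by rw [hmulw, mul_one]
          _ = ((x + 2) * ((2 : A) - y)) * w := by rw [mul_assoc]
          _ = 4 * w := by rw [h1]
      have hwunit : IsUnit w := by
        obtain ⟨U, hU⟩ := hu2my
        rw [hw, ← hU, Ring.inverse_unit]
        exact ⟨U⁻¹, rfl⟩
      have hinv4w : Ring.inverse ((4 : A) * w) = ((2 : A) - y) * Ring.inverse 4 := by
        rw [aux_inv_rev h4 hwunit, hw, aux_inv_inv hu2my]
      rw [hx2, hinv4w, hxdef]
      have hcomm4 : Commute y (Ring.inverse (4 : A)) := by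
        refine aux_comm_inv ?_ h4
        exact (Commute.ofNat_right y 4)
      calc 2 * (2 * y * w) * (((2 : A) - y) * Ring.inverse 4)
          = 4 * y * (w * ((2 : A) - y)) * Ring.inverse 4 := by noncomm_ring
        _ = 4 * y * Ring.inverse 4 := by rw [hwmul, mul_one]
        _ = 4 * Ring.inverse 4 * y := by rw [mul_assoc, hcomm4.eq, mul_assoc]
        _ = y := by rw [Ring.mul_inverse_cancel _ h4, one_mul]
end

section
/- Let G be a finite group and suppose {χ_α} is a set of pairwise orthogonal characters of G, constant on the parts of a partition {K_β} of G with |{χ_α}| = |{K_β}| and {1} ∈ {K_β}. Then every irreducible character of G is a constituent of exactly one χ_α. -/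
/-!
Orthogonal nonzero functions are linearly independent, and the supercharacters lie in the space
of functions constant on the superclasses, whose dimension is at most the number of superclasses;
hence they span that space. Since `{1}` is a superclass, the indicator `δ₁` of the identity is a
combination of supercharacters, and `⟨δ₁, ψ⟩ = ψ(1) ≠ 0` forces `⟨χ, ψ⟩ ≠ 0` for some
supercharacter `χ`.

For uniqueness, `conj (χ_W g) = χ_W g⁻¹` turns `⟨χ_W, χ_V⟩` into `|G| · dim Hom(V, W)`. If the
simple `V` is a constituent of both `χ_W₀` and `χ_W₁`, a nonzero map `W₀ ⟶ V` followed by the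
(injective, by Schur) nonzero map `V ⟶ W₁` is nonzero, so `⟨χ_W₁, χ_W₀⟩ ≠ 0`, contradicting
orthogonality.
-/

open Module CategoryTheory
open scoped ComplexOrder Matrix

/-- Weyl's unitary trick: `P = ∑ₕ ρ(h)ᴴ ρ(h)` is positive definite with `ρ(g)ᴴ P ρ(g) = P`,
so `ρ(g)ᴴ` is conjugate to `ρ(g⁻¹)`. -/
theorem Matrix.star_trace_apply_eq_trace_apply_inv {G n K : Type*} [Group G] [Fintype G]
    [Fintype n] [DecidableEq n] [Field K] [StarRing K] [PartialOrder K] [StarOrderedRing K]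
    (ρ : G →* Matrix n n K) (g : G) : star (ρ g).trace = (ρ g⁻¹).trace := by
  classical
  have hP : (∑ h, (ρ h)ᴴ * ρ h).PosDef := by
    rw [← Finset.add_sum_erase _ _ (Finset.mem_univ (1 : G)), map_one, conjTranspose_one,
      one_mul]
    exact PosDef.one.add_posSemidef
      (posSemidef_sum _ fun h _ => posSemidef_conjTranspose_mul_self (ρ h))
  set P := ∑ h, (ρ h)ᴴ * ρ h
  have hinv : (ρ g)ᴴ * P * ρ g = P := by
    simp only [P, Finset.mul_sum, Finset.sum_mul]
    exact Fintype.sum_equiv (Equiv.mulRight g) _ _ fun h => by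
      simp [map_mul, conjTranspose_mul, Matrix.mul_assoc]
  have hunit : IsUnit P := hP.isUnit
  calc star (ρ g).trace = ((ρ g)ᴴ * P * ρ g * ρ g⁻¹ * P⁻¹).trace := by
        rw [Matrix.mul_assoc _ (ρ g), ← map_mul, mul_inv_cancel, map_one, Matrix.mul_one,
          Matrix.mul_assoc, mul_nonsing_inv _ ((isUnit_iff_isUnit_det P).mp hunit),
          Matrix.mul_one, trace_conjTranspose]
    _ = (ρ g⁻¹).trace := by rw [hinv, trace_conj hunit]

theorem linearIndepOn_of_dotProduct_star_eq_zero {n K : Type*} [Fintype n] [Field K] [StarRing K]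
    [PartialOrder K] [StarOrderedRing K] {s : Set (n → K)} (h0 : 0 ∉ s)
    (hortho : ∀ v ∈ s, ∀ w ∈ s, v ≠ w → v ⬝ᵥ star w = 0) : LinearIndepOn K id s := by
  rw [LinearIndepOn, linearIndependent_iff']
  intro t c hsum v hv
  have hpair : ∑ w ∈ t, c w * ((w : n → K) ⬝ᵥ star (v : n → K))
      = c v * ((v : n → K) ⬝ᵥ star (v : n → K)) :=
    Finset.sum_eq_single_of_mem v hv fun w _ hwv => by
      rw [hortho w w.2 v v.2 (Subtype.coe_ne_coe.mpr hwv), mul_zero]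
  have hself : (v : n → K) ⬝ᵥ star (v : n → K) ≠ 0 :=
    dotProduct_self_star_eq_zero.not.mpr fun h => h0 (h ▸ v.2)
  have hzero : c v * ((v : n → K) ⬝ᵥ star (v : n → K)) = 0 := by
    simp_rw [← hpair, ← smul_eq_mul, ← smul_dotProduct, ← sum_dotProduct]
    simp only [id_eq] at hsum
    rw [hsum, zero_dotProduct]
  exact (mul_eq_zero.mp hzero).resolve_right hself

theorem exists_mem_dotProduct_ne_zero_of_mem_span {n R : Type*} [Fintype n] [CommSemiring R]
    {s : Set (n → R)} {u w : n → R} (hu : u ∈ Submodule.span R s) (huw : u ⬝ᵥ w ≠ 0) :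
    ∃ v ∈ s, v ⬝ᵥ w ≠ 0 := by
  by_contra! h
  exact huw (Submodule.span_le.mpr (fun v hv => h v hv) hu :
    u ∈ LinearMap.ker ((dotProductBilin R R).flip w))

section ConstantOnBlocks

variable {α : Type*}

def constantOnBlocks (R : Type*) [Semiring R] (K : Set (Set α)) : Submodule R (α → R) where
  carrier := {f | ∀ P ∈ K, ∀ x ∈ P, ∀ y ∈ P, f x = f y}
  add_mem' hf hg P hP x hx y hy := by
    simp only [Pi.add_apply, hf P hP x hx y hy, hg P hP x hx y hy]
  zero_mem' _ _ _ _ _ _ := rfl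
  smul_mem' c f hf P hP x hx y hy := by simp only [Pi.smul_apply, hf P hP x hx y hy]

theorem finrank_constantOnBlocks_le (R : Type*) [Field R] {K : Finset (Set α)}
    (hK : Setoid.IsPartition (K : Set (Set α))) :
    finrank R (constantOnBlocks R (K : Set (Set α))) ≤ K.card := by
  choose block hblock using fun x => (hK.2 x).exists
  choose rep hrep using fun P : K => Setoid.nonempty_of_mem_partition hK P.2
  have hle : constantOnBlocks R (K : Set (Set α)) ≤
      LinearMap.range (LinearMap.funLeft R R fun x => (⟨block x, (hblock x).1⟩ : K)) :=
    fun f hf => ⟨fun P => f (rep P), funext fun x =>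
      hf _ (hblock x).1 _ (hrep ⟨block x, (hblock x).1⟩) x (hblock x).2⟩
  calc finrank R (constantOnBlocks R (K : Set (Set α)))
      ≤ finrank R (K → R) := (Submodule.finrank_mono hle).trans (LinearMap.finrank_range_le _)
    _ = K.card := by simp

theorem single_mem_constantOnBlocks (R : Type*) [Semiring R] [DecidableEq α] {K : Set (Set α)}
    (hK : Setoid.IsPartition K) {a : α} (ha : {a} ∈ K) :
    Pi.single a 1 ∈ constantOnBlocks R K := by
  intro P hP x hx y hy
  by_cases haP : a ∈ P
  · obtain rfl : P = {a} := Setoid.eq_of_mem_eqv_class hK.2 hP haP ha rfl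
    rw [Set.mem_singleton_iff.mp hx, Set.mem_singleton_iff.mp hy]
  · rw [Pi.single_eq_of_ne (ne_of_mem_of_not_mem hx haP),
      Pi.single_eq_of_ne (ne_of_mem_of_not_mem hy haP)]

end ConstantOnBlocks

namespace FDRep

variable {𝕜 : Type} [RCLike 𝕜] {G : Type} [Group G]

theorem finrank_ne_zero_of_simple (V : FDRep 𝕜 G) [Simple V] : finrank 𝕜 V ≠ 0 := by
  intro h
  have : Subsingleton V := Module.finrank_zero_iff.mp h
  exact id_nonzero V (Action.hom_ext _ _ (by ext v; exact Subsingleton.elim _ _))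

variable [Fintype G]

theorem star_character (V : FDRep 𝕜 G) (g : G) : star (V.character g) = V.character g⁻¹ := by
  let b := Module.finBasis 𝕜 V
  simp only [FDRep.character, LinearMap.trace_eq_matrix_trace 𝕜 b]
  exact Matrix.star_trace_apply_eq_trace_apply_inv
    ((LinearMap.toMatrixAlgEquiv b).toRingEquiv.toMonoidHom.comp V.ρ) g

theorem character_dotProduct_star_character (V W : FDRep 𝕜 G) :
    W.character ⬝ᵥ star V.character = Fintype.card G * finrank 𝕜 (V ⟶ W) := by
  have : Invertible (Nat.card G : 𝕜) := invertibleOfNonzero (by simp)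
  have h := scalar_product_char_eq_finrank_equivariant V W
  rw [inv_mul_eq_iff_eq_mul₀ (by simp), Nat.card_eq_fintype_card] at h
  rw [← h]
  exact Finset.sum_congr rfl fun g _ => by rw [Pi.star_apply, star_character]

theorem character_dotProduct_star_character_ne_zero_iff (V W : FDRep 𝕜 G) :
    W.character ⬝ᵥ star V.character ≠ 0 ↔ Nontrivial (V ⟶ W) := by
  rw [character_dotProduct_star_character, ← Module.finrank_pos_iff (R := 𝕜)]
  simp [Nat.pos_iff_ne_zero]

theorem character_dotProduct_star_character_ne_zero_of_simple {W₀ W₁ V : FDRep 𝕜 G} [Simple V]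
    (h₀ : W₀.character ⬝ᵥ star V.character ≠ 0) (h₁ : W₁.character ⬝ᵥ star V.character ≠ 0) :
    W₁.character ⬝ᵥ star W₀.character ≠ 0 := by
  rw [← star_ne_zero, ← Matrix.star_dotProduct_star, star_star,
    character_dotProduct_star_character_ne_zero_iff] at h₀
  rw [character_dotProduct_star_character_ne_zero_iff] at h₁ ⊢
  obtain ⟨p, hp⟩ := exists_ne (0 : W₀ ⟶ V)
  obtain ⟨f, hf⟩ := exists_ne (0 : V ⟶ W₁)
  have : Mono f := mono_of_nonzero_from_simple hf
  exact ⟨p ≫ f, 0, fun h => hp (Limits.zero_of_comp_mono f h)⟩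

end FDRep

/-- Corollary to Theorems 1 and 2: in a supercharacter theory of a
finite group `G` — a set `Ch` of pairwise orthogonal nonzero characters, constant on
the parts of a partition `K` of `G` with `|Ch| = |K|` and `{1} ∈ K` — every
irreducible character of `G` is a constituent of exactly one supercharacter. -/
theorem stmt14 {G : Type} [Group G] [Fintype G]
    (Ch : Finset (G → ℂ)) (K : Finset (Set G))
    (hrep : ∀ χ ∈ Ch, ∃ W : FDRep ℂ G, χ = W.character)
    (hnonzero : ∀ χ ∈ Ch, χ ≠ 0)
    (hpart : Setoid.IsPartition (↑K : Set (Set G)))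
    (hone : {(1 : G)} ∈ K)
    (hconst : ∀ χ ∈ Ch, ∀ P ∈ K, ∀ x ∈ P, ∀ y ∈ P, χ x = χ y)
    (hortho : ∀ χ ∈ Ch, ∀ χ' ∈ Ch, χ ≠ χ' →
      ∑ g : G, χ g * (starRingEnd ℂ) (χ' g) = 0)
    (hcard : Ch.card = K.card)
    (V : FDRep ℂ G) (hV : CategoryTheory.Simple V) :
    ∃! χ : G → ℂ, χ ∈ Ch ∧
      ∑ g : G, χ g * (starRingEnd ℂ) (V.character g) ≠ 0 := by
  classical
  have := hV
  -- `χ ⬝ᵥ star ψ` is definitionally the sum `∑ g, χ g * conj (ψ g)` of the statement.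
  have hli : LinearIndepOn ℂ id (Ch : Set (G → ℂ)) :=
    linearIndepOn_of_dotProduct_star_eq_zero (fun h => hnonzero 0 h rfl) hortho
  have hspan : Submodule.span ℂ (Ch : Set (G → ℂ)) = constantOnBlocks ℂ (K : Set (Set G)) :=
    Submodule.eq_of_le_of_finrank_le (Submodule.span_le.mpr hconst)
      (by rw [finrank_span_finset_eq_card hli, hcard]; exact finrank_constantOnBlocks_le ℂ hpart)
  have hδ : Pi.single (1 : G) 1 ∈ Submodule.span ℂ (Ch : Set (G → ℂ)) :=
    hspan ▸ single_mem_constantOnBlocks ℂ hpart hone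
  have hδV : Pi.single (1 : G) 1 ⬝ᵥ star V.character ≠ 0 := by
    rw [single_dotProduct, one_mul, Pi.star_apply, star_ne_zero, FDRep.char_one]
    exact_mod_cast FDRep.finrank_ne_zero_of_simple V
  obtain ⟨χ, hχ, hχV⟩ := exists_mem_dotProduct_ne_zero_of_mem_span hδ hδV
  refine ⟨χ, ⟨hχ, hχV⟩, fun χ' ⟨hχ', hχ'V⟩ => ?_⟩
  by_contra hne
  obtain ⟨W, rfl⟩ := hrep χ hχ
  obtain ⟨W', rfl⟩ := hrep χ' hχ'
  exact FDRep.character_dotProduct_star_character_ne_zero_of_simple hχV hχ'V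
    (hortho _ hχ' _ hχ hne)
end

section
/- Let 𝒰 ⊆ Mat(N, F_q) be the nilpotent radical of a parabolic subalgebra (strictly upper block-triangular matrices for a decomposition of [1,N] into consecutive blocks), with involution x† = I_N xᵀ I_N, and let 𝔲 = {x ∈ 𝒰 : x† = -x}. Let ℋ ⊆ 𝒰 be the subspace of matrices x = (x_{ij}) such that x_{ij} ≠ 0 implies row i lies in the union of the non-negative block-rows. Then ℋ is a two-sided ideal of the associative algebra 𝒰, and for all y ∈ ℋ and x ∈ 𝔲, y† x y = 0. -/
open Matrix

/-- Let `𝒰` be the nilpotent radical of a parabolic subalgebra of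
`Mat(N, F_q)`: the strictly block-upper-triangular matrices for a decomposition of the
index set into `m` consecutive blocks (recorded by a monotone block-index function `β`)
which is symmetric about the middle (`β i + β (rev i) + 1 = m`). Let
`x† = I_N xᵀ I_N`, i.e. `(x†) i j = x (rev j) (rev i)`, let
`𝔲 = {x ∈ 𝒰 : x† = -x}`, and let `ℋ ⊆ 𝒰` be the subspace of matrices whose nonzero
rows lie in the non-negative block-rows (`2 β i + 1 ≤ m`). Then `ℋ` is a two-sided
ideal of the associative algebra `𝒰`, and `y† x y = 0` for all `y ∈ ℋ`, `x ∈ 𝔲`. -/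
theorem stmt15 {F : Type*} [Field F] [Fintype F] (N m : ℕ)
    (β : Fin N → ℕ) (hmono : Monotone β)
    (hsym : ∀ i : Fin N, β i + β i.rev + 1 = m)
    (𝒰 𝔲 ℋ : Set (Matrix (Fin N) (Fin N) F))
    (h𝒰 : 𝒰 = {x | ∀ i j : Fin N, ¬ β i < β j → x i j = 0})
    (dag : Matrix (Fin N) (Fin N) F → Matrix (Fin N) (Fin N) F)
    (hdag : ∀ x, ∀ i j : Fin N, dag x i j = x j.rev i.rev)
    (h𝔲 : 𝔲 = {x ∈ 𝒰 | dag x = -x})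
    (hℋ : ℋ = {x ∈ 𝒰 | ∀ i j : Fin N, x i j ≠ 0 → 2 * β i + 1 ≤ m}) :
    (∀ x ∈ 𝒰, ∀ y ∈ ℋ, x * y ∈ ℋ ∧ y * x ∈ ℋ) ∧
    (∀ y ∈ ℋ, ∀ x ∈ 𝔲, dag y * x * y = 0) := by
  subst h𝒰 h𝔲 hℋ
  constructor
  · rintro x hx y ⟨hy𝒰, hyrow⟩
    refine ⟨⟨?_, ?_⟩, ?_, ?_⟩
    · intro i j hij
      rw [Matrix.mul_apply]
      apply Finset.sum_eq_zero
      intro k _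
      by_cases h1 : β i < β k
      · by_cases h2 : β k < β j
        · exact absurd (h1.trans h2) hij
        · rw [hy𝒰 k j h2, mul_zero]
      · rw [hx i k h1, zero_mul]
    · intro i j h
      rw [Matrix.mul_apply] at h
      obtain ⟨k, _, hk⟩ := Finset.exists_ne_zero_of_sum_ne_zero h
      have h1 : β i < β k := by
        by_contra h1; rw [hx i k h1, zero_mul] at hk; exact hk rfl
      have h2 : y k j ≠ 0 := fun h2 => hk (by rw [h2, mul_zero])
      have := hyrow k j h2
      omega
    · intro i j hij
      rw [Matrix.mul_apply]
      apply Finset.sum_eq_zero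
      intro k _
      by_cases h1 : β i < β k
      · by_cases h2 : β k < β j
        · exact absurd (h1.trans h2) hij
        · rw [hx k j h2, mul_zero]
      · rw [hy𝒰 i k h1, zero_mul]
    · intro i j h
      rw [Matrix.mul_apply] at h
      obtain ⟨k, _, hk⟩ := Finset.exists_ne_zero_of_sum_ne_zero h
      have h2 : y i k ≠ 0 := fun h2 => hk (by rw [h2, zero_mul])
      exact hyrow i k h2
  · rintro y ⟨hy𝒰, hyrow⟩ x ⟨hx𝒰, -⟩
    ext i j
    rw [Matrix.zero_apply, Matrix.mul_apply]
    apply Finset.sum_eq_zero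
    intro l _
    rcases eq_or_ne (y l j) 0 with h | hylj
    · rw [h, mul_zero]
    rw [Matrix.mul_apply]
    rw [Finset.sum_mul]
    apply Finset.sum_eq_zero
    intro k _
    rcases eq_or_ne (x k l) 0 with h | hxkl
    · rw [h, mul_zero, zero_mul]
    rcases eq_or_ne (dag y i k) 0 with h | hdik
    · rw [h, zero_mul, zero_mul]
    exfalso
    rw [hdag] at hdik
    have h1 : β k.rev < β i.rev := by
      by_contra h; exact hdik (hy𝒰 _ _ h)
    have h2 := hyrow _ _ hdik
    have h3 : β k < β l := by
      by_contra h; exact hxkl (hx𝒰 _ _ h)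
    have h4 := hyrow _ _ hylj
    have h5 := hsym k
    omega
end

section
/- Let G = L ⋉ U be a finite semidirect product, N ⊴ L a normal subgroup, θ : N → ℂ a function such that θ(ρrρ⁻¹) = θ(r) for all r ∈ N, ρ ∈ L, and let ζ : U → ℂ be a function on U with ζ(ρuρ⁻¹) = ζ(u) for all ρ ∈ N, u ∈ U, and with ζ(vuv⁻¹) = ζ(u) for all u, v ∈ U. Suppose φ(ru) = θ(r)ζ(u) (r ∈ N, u ∈ U) is a character of NU. Then for g = ru (r ∈ L, u ∈ U) the induced character satisfies Ind_{NU}^{G} φ(g) = (1/|N|)·Σ_{ρ ∈ L} θ̇(ρrρ⁻¹)·ζ_ρ(u), where θ̇ extends θ by zero outside N and ζ_ρ(u) = ζ(ρuρ⁻¹). -/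
/-- induced character formula with collapse. Let `G = L ⋉ U` be a finite
semidirect product (`U ⊴ G`, `L` a complement), `N ⊴ L`, `θ̇ : G → ℂ` supported on `N`
with `θ̇(ρ r ρ⁻¹) = θ̇(r)` for `r ∈ N`, `ρ ∈ L`, and `ζ : G → ℂ` invariant under
conjugation by `N` and by `U`. Suppose `φ(r u) = θ̇(r) ζ(u)` is the character of a
representation of the subgroup `N ⊔ U = NU`. Then the induced character satisfies
`Ind_{NU}^G φ (r u) = (1/|N|) ∑_{ρ ∈ L} θ̇(ρ r ρ⁻¹) ζ(ρ u ρ⁻¹)`, where by the standard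
formula `Ind_{NU}^G φ (g) = (1/|NU|) ∑_{s ∈ G} φ̇(s g s⁻¹)` and `|NU| = |N|·|U|`. -/
theorem stmt19 {G : Type} [Group G] [Fintype G] [DecidableEq G]
    (U L N : Subgroup G) (hU : U.Normal) (hNL : N ≤ L)
    (hNnormal : ∀ ρ ∈ L, ∀ n ∈ N, ρ * n * ρ⁻¹ ∈ N)
    (hdec : ∀ g : G, ∃! p : L × U, g = (p.1 : G) * (p.2 : G))
    (θd : G → ℂ) (hθsupp : ∀ g : G, g ∉ N → θd g = 0)
    (hθinv : ∀ ρ ∈ L, ∀ r ∈ N, θd (ρ * r * ρ⁻¹) = θd r)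
    (ζ : G → ℂ)
    (hζN : ∀ ρ ∈ N, ∀ u ∈ U, ζ (ρ * u * ρ⁻¹) = ζ u)
    (hζU : ∀ v ∈ U, ∀ u ∈ U, ζ (v * u * v⁻¹) = ζ u)
    (φd : G → ℂ) (hφd : ∀ r : L, ∀ u : U, φd ((r : G) * (u : G)) = θd r * ζ u)
    (hchar : ∃ W : FDRep ℂ ↥(N ⊔ U), ∀ h : ↥(N ⊔ U), W.character h = φd h) :
    ∀ r : L, ∀ u : U,
      (1 / ((Nat.card N : ℂ) * (Nat.card U : ℂ))) *
          ∑ s : G, φd (s * ((r : G) * (u : G)) * s⁻¹) =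
        (1 / (Nat.card N : ℂ)) *
          ∑ ρ : G, Set.indicator (L : Set G)
            (fun ρ : G => θd (ρ * r * ρ⁻¹) * ζ (ρ * u * ρ⁻¹)) ρ := by
  classical
  obtain ⟨W, hW⟩ := hchar
  intro r u
  have hNU : N ≤ N ⊔ U := le_sup_left
  have hUNU : U ≤ N ⊔ U := le_sup_right
  -- pointwise key lemma
  have key : ∀ ρ : L, ∀ v : U,
      φd (((ρ : G) * (v : G)) * ((r : G) * (u : G)) * ((ρ : G) * (v : G))⁻¹)
        = θd ((ρ : G) * r * (ρ : G)⁻¹) * ζ ((ρ : G) * u * (ρ : G)⁻¹) := by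
    intro ρ v
    have hr' : (ρ : G) * r * (ρ : G)⁻¹ ∈ L := mul_mem (mul_mem ρ.2 r.2) (inv_mem ρ.2)
    have hu' : (ρ : G) * u * (ρ : G)⁻¹ ∈ U := hU.conj_mem u u.2 ρ
    have hb : (ρ : G) * v * (ρ : G)⁻¹ ∈ U := hU.conj_mem v v.2 ρ
    by_cases hrN : (ρ : G) * r * (ρ : G)⁻¹ ∈ N
    · -- use the class-function property of the character on N ⊔ U
      set b : G := (ρ : G) * v * (ρ : G)⁻¹ with hbdef
      set y : G := ((ρ : G) * r * (ρ : G)⁻¹) * ((ρ : G) * u * (ρ : G)⁻¹) with hydef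
      have hymem : y ∈ N ⊔ U := mul_mem (hNU hrN) (hUNU hu')
      have hbmem : b ∈ N ⊔ U := hUNU hb
      have hconj : ((ρ : G) * (v : G)) * ((r : G) * (u : G)) * ((ρ : G) * (v : G))⁻¹
          = b * y * b⁻¹ := by
        simp only [hbdef, hydef]; group
      have hclass : φd (b * y * b⁻¹) = φd y := by
        have h1 := hW ((⟨b, hbmem⟩ : ↥(N ⊔ U)) * ⟨y, hymem⟩ * (⟨b, hbmem⟩ : ↥(N ⊔ U))⁻¹)
        have h2 := hW (⟨y, hymem⟩ : ↥(N ⊔ U))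
        have h3 := FDRep.char_conj W (⟨y, hymem⟩ : ↥(N ⊔ U)) ⟨b, hbmem⟩
        simp only [Subgroup.coe_mul, Subgroup.coe_inv] at h1 h2
        rw [← h1, h3, h2]
      rw [hconj, hclass, hydef]
      exact hφd ⟨_, hr'⟩ ⟨_, hu'⟩
    · -- both sides vanish
      have hw : ((ρ : G) * r * (ρ : G)⁻¹)⁻¹ * ((ρ : G) * v * (ρ : G)⁻¹)
          * ((ρ : G) * r * (ρ : G)⁻¹) * ((ρ : G) * u * (ρ : G)⁻¹)
          * ((ρ : G) * v * (ρ : G)⁻¹)⁻¹ ∈ U := by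
        refine mul_mem (mul_mem ?_ hu') (inv_mem hb)
        have := hU.conj_mem _ hb ((ρ : G) * r * (ρ : G)⁻¹)⁻¹
        simpa [mul_assoc] using this
      have hdecomp : ((ρ : G) * (v : G)) * ((r : G) * (u : G)) * ((ρ : G) * (v : G))⁻¹
          = ((ρ : G) * r * (ρ : G)⁻¹) *
            (((ρ : G) * r * (ρ : G)⁻¹)⁻¹ * ((ρ : G) * v * (ρ : G)⁻¹)
              * ((ρ : G) * r * (ρ : G)⁻¹) * ((ρ : G) * u * (ρ : G)⁻¹)
              * ((ρ : G) * v * (ρ : G)⁻¹)⁻¹) := by group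
      rw [hdecomp, hφd ⟨_, hr'⟩ ⟨_, hw⟩, hθsupp _ hrN, zero_mul, zero_mul]
  -- the bijection G ≃ L × U
  have hbij : Function.Bijective (fun p : L × U => (p.1 : G) * (p.2 : G)) := by
    constructor
    · intro p q h
      obtain ⟨w, -, hw⟩ := hdec ((p.1 : G) * (p.2 : G))
      exact (hw p rfl).trans (hw q h).symm
    · intro g
      obtain ⟨p, hp, -⟩ := hdec g
      exact ⟨p, hp.symm⟩
  have hsum : ∑ s : G, φd (s * ((r : G) * (u : G)) * s⁻¹)
      = ∑ p : L × U, φd (((p.1 : G) * (p.2 : G)) * ((r : G) * (u : G))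
          * ((p.1 : G) * (p.2 : G))⁻¹) :=
    (Fintype.sum_bijective _ hbij _ _ (fun p => rfl)).symm
  have hind : ∑ ρ : G, Set.indicator (L : Set G)
      (fun ρ : G => θd (ρ * r * ρ⁻¹) * ζ (ρ * u * ρ⁻¹)) ρ
      = ∑ ρ : L, θd ((ρ : G) * r * (ρ : G)⁻¹) * ζ ((ρ : G) * u * (ρ : G)⁻¹) := by
    rw [Finset.sum_indicator_eq_sum_filter]
    exact (Finset.sum_subtype (p := fun x => x ∈ L) (Finset.univ.filter (fun i : G => i ∈ (L : Set G)))
      (fun x => by simp [SetLike.mem_coe]) (fun ρ : G => θd (ρ * r * ρ⁻¹) * ζ (ρ * u * ρ⁻¹)))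
  have hcardU : (Nat.card U : ℂ) ≠ 0 := by
    exact_mod_cast (Nat.card_pos (α := U)).ne'
  rw [hsum, hind, Fintype.sum_prod_type]
  have : ∀ ρ : L, ∑ v : U, φd (((ρ : G) * (v : G)) * ((r : G) * (u : G))
      * ((ρ : G) * (v : G))⁻¹)
      = (Nat.card U : ℂ) * (θd ((ρ : G) * r * (ρ : G)⁻¹) * ζ ((ρ : G) * u * (ρ : G)⁻¹)) := by
    intro ρ
    simp only [key ρ]
    rw [Finset.sum_const, Finset.card_univ, nsmul_eq_mul, Nat.card_eq_fintype_card]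
  rw [Finset.sum_congr rfl (fun ρ _ => this ρ), ← Finset.mul_sum]
  field_simp
end
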